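/- Let $T$ be a totally transcendental theory in which every definable set has finite Morley rank, working in a saturated model. If $p \in S(A)$ is a minimal type (stationary of $U$-rank 1) that is trivial, then $p$ is modular: for any tuples $a, b$ of realizations of $p$, $a$ is independent from $b$ over $\mathrm{acl}^{eq}(Aa) \cap \mathrm{acl}^{eq}(Ab)$. -/
import Mathlib


/-- A pregeometry (combinatorial geometry), abstracting the geometry of algebraic
closure on the set of realizations of a minimal type `p ∈ S(A)` (stationary of
U-rank 1) in a totally transcendental theory, with `cl` standing for
`b ↦ acl^{eq}(A ∪ b)` restricted to realizations of `p`. -/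
structure Pregeom (α : Type*) where
  cl : Set α → Set α
  subset_cl : ∀ A : Set α, A ⊆ cl A
  mono : ∀ {A B : Set α}, A ⊆ B → cl A ⊆ cl B
  idem : ∀ A : Set α, cl (cl A) = cl A
  exchange : ∀ (A : Set α) (a b : α), a ∈ cl (A ∪ {b}) → a ∉ cl A → b ∈ cl (A ∪ {a})
  finChar : ∀ (A : Set α) (a : α), a ∈ cl A → ∃ F ⊆ A, F.Finite ∧ a ∈ cl F

/-- `W` is an independent set over `Z`. -/
def Pregeom.IndepOver {α : Type*} (P : Pregeom α) (Z W : Set α) : Prop :=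
  ∀ w ∈ W, w ∉ P.cl ((W \ {w}) ∪ Z)

/-- `X` is (forking-)independent from `Y` over `Z`: every subset of `X` independent
over `Z` remains independent over `Z ∪ Y`. -/
def Pregeom.IndepFrom {α : Type*} (P : Pregeom α) (X Y Z : Set α) : Prop :=
  ∀ W ⊆ X, P.IndepOver Z W → P.IndepOver (Z ∪ Y) W

/-- Triviality of the minimal type: if `x ∈ acl(A ∪ B)` then `x ∈ acl(A)` or
`x ∈ acl(A ∪ {b})` for some single `b ∈ B`. -/
def Pregeom.IsTrivial {α : Type*} (P : Pregeom α) : Prop :=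
  ∀ (B : Set α) (x : α), x ∈ P.cl B → x ∈ P.cl ∅ ∨ ∃ b ∈ B, x ∈ P.cl {b}

/-- a trivial minimal type is modular: any two (finite) tuples `a`, `b`
of realizations of `p` are independent over `acl^{eq}(Aa) ∩ acl^{eq}(Ab)`. -/
theorem stmt_11 {α : Type*} (P : Pregeom α) (htriv : P.IsTrivial) :
    ∀ X Y : Set α, X.Finite → Y.Finite → P.IndepFrom X Y (P.cl X ∩ P.cl Y) := by
  intro X Y _ _ W hWX hW w hwW hcon
  have hind := hW w hwW
  rcases htriv _ w hcon with h0 | ⟨b, hb, hwb⟩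
  · exact hind (P.mono (Set.empty_subset _) h0)
  · rcases hb with hb | (hb | hbY)
    · exact hind (P.mono (Set.singleton_subset_iff.mpr (Or.inl hb)) hwb)
    · exact hind (P.mono (Set.singleton_subset_iff.mpr (Or.inr hb)) hwb)
    · by_cases h0 : w ∈ P.cl ∅
      · exact hind (P.mono (Set.empty_subset _) h0)
      · have hex : b ∈ P.cl (∅ ∪ {w}) := P.exchange ∅ w b (by simpa using hwb) h0
        have hwX : ({w} : Set α) ⊆ X := Set.singleton_subset_iff.mpr (hWX hwW)
        have hbclX : b ∈ P.cl X := P.mono (by simpa using hwX) hex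
        have hbZ : b ∈ P.cl X ∩ P.cl Y := ⟨hbclX, P.subset_cl Y hbY⟩
        exact hind (P.mono (Set.singleton_subset_iff.mpr (Or.inr hbZ)) hwb)
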